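/- Let (E,𝓛,Ē^{0,-}) be a weakly left-resolving and strongly cofinal labelled space satisfying the standing assumptions, such that {w} ∈ Ē^{0,-} for every w ∈ E^0. If [v]_l is not disagreeable for some v ∈ E^0 and l ≥ 1, then 𝓛(vE^∞) = {β^∞} for a single simple labelled path β ∈ 𝓛(E^{≤l}), i.e., there is exactly one infinite labelled path with source v and it is periodic with simple period of length at most l. -/

import Mathlib

open scoped BigOperators

/-- The `n`-fold concatenation power of a word. -/
def wpow {A : Type*} (β : List A) : ℕ → List A
  | 0 => []
  | n + 1 => β ++ wpow β n

/-- A word is simple if it is not a power of a strictly shorter word. -/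
def SimpleWord {A : Type*} (β : List A) : Prop :=
  β ≠ [] ∧ ¬ ∃ (δ : List A) (n : ℕ), δ ≠ [] ∧ δ.length < β.length ∧ 1 ≤ n ∧ β = wpow δ n

/-- The initial segment `x_{[1,N]}` of an infinite word. -/
def finTake {A : Type*} (x : ℕ → A) (N : ℕ) : List A := List.ofFn (fun i : Fin N => x i)

/-- `x = β^∞`, the periodic infinite word with period `β`. -/
def isPowInf {A : Type*} (β : List A) (x : ℕ → A) : Prop :=
  ∃ h : β ≠ [], ∀ n : ℕ,
    x n = β.get ⟨n % β.length, Nat.mod_lt n (List.length_pos_iff.mpr h)⟩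

/-- A labelled graph: a directed graph together with a surjective labelling of edges. -/
structure LabelledGraph (V : Type*) (Ed : Type*) (A : Type*) where
  src : Ed → V
  rng : Ed → V
  lbl : Ed → A
  lbl_surj : Function.Surjective lbl

/-- A finite path (of length ≥ 1) in a directed graph. -/
structure LabelledGraph.GPath {V Ed A : Type*} (G : LabelledGraph V Ed A) where
  edges : List Ed
  ne : edges ≠ []
  chain : edges.Chain' (fun e f => G.rng e = G.src f)

/-- An infinite path in a directed graph. -/
structure LabelledGraph.GInfPath {V Ed A : Type*} (G : LabelledGraph V Ed A) where
  edges : ℕ → Ed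
  chain : ∀ n, G.rng (edges n) = G.src (edges (n + 1))

namespace LabelledGraph

variable {V Ed A : Type*}

def GPath.src {G : LabelledGraph V Ed A} (p : G.GPath) : V := G.src (p.edges.head p.ne)

def GPath.rng {G : LabelledGraph V Ed A} (p : G.GPath) : V := G.rng (p.edges.getLast p.ne)

def GPath.label {G : LabelledGraph V Ed A} (p : G.GPath) : List A := p.edges.map G.lbl

def GPath.len {G : LabelledGraph V Ed A} (p : G.GPath) : ℕ := p.edges.length

def GInfPath.src {G : LabelledGraph V Ed A} (q : G.GInfPath) : V := G.src (q.edges 0)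

def GInfPath.label {G : LabelledGraph V Ed A} (q : G.GInfPath) : ℕ → A :=
  fun n => G.lbl (q.edges n)

variable (G : LabelledGraph V Ed A)

/-- `α ∈ 𝓛(E^{≥1})`: `α` is the label of some finite path. -/
def IsLabelled (α : List A) : Prop := ∃ p : G.GPath, p.label = α

/-- `s(α)`, the set of sources of paths labelled `α`. -/
def srcSet (α : List A) : Set V := { v | ∃ p : G.GPath, p.label = α ∧ p.src = v }

/-- `r(α)`, the set of ranges of paths labelled `α`. -/
def rngSet (α : List A) : Set V := { v | ∃ p : G.GPath, p.label = α ∧ p.rng = v }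

/-- The relative range `r(S,α)` of `α` with respect to `S`. -/
def relRange (S : Set V) (α : List A) : Set V :=
  { v | ∃ p : G.GPath, p.label = α ∧ p.src ∈ S ∧ p.rng = v }

/-- `x ∈ 𝓛(E^∞)`: the infinite word `x` is the label of some infinite path. -/
def IsInfLabelled (x : ℕ → A) : Prop := ∃ q : G.GInfPath, q.label = x

/-- `s(x)` for an infinite labelled path `x`. -/
def infSrc (x : ℕ → A) : Set V := { v | ∃ q : G.GInfPath, q.label = x ∧ q.src = v }

/-- `𝓛(SE^1)`: labels of edges with source in `S`. -/
def labelsFrom (S : Set V) : Set A := { a | ∃ e : Ed, G.src e ∈ S ∧ G.lbl e = a }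

/-- `𝓛(E^1S)`: labels of edges with range in `S`. -/
def labelsInto (S : Set V) : Set A := { a | ∃ e : Ed, G.rng e ∈ S ∧ G.lbl e = a }

/-- `𝓛(SE^n)`: labels of paths of length `n` with source in `S`. -/
def nLabelsFrom (S : Set V) (n : ℕ) : Set (List A) :=
  { α | ∃ p : G.GPath, p.label = α ∧ p.src ∈ S ∧ p.len = n }

/-- `𝓛(E^{≤l}v)`: labels of paths of length at most `l` with range `v`. -/
def labelsToVtx (l : ℕ) (v : V) : Set (List A) :=
  { α | ∃ p : G.GPath, p.label = α ∧ p.len ≤ l ∧ p.rng = v }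

/-- The generalized vertex `[v]_l`. -/
def genVertex (l : ℕ) (v : V) : Set V := { w | G.labelsToVtx l w = G.labelsToVtx l v }

/-- `Ē^{0,-}`: the collection of all finite unions of generalized vertices. -/
def barE : Set (Set V) :=
  { S | ∃ (l : ℕ) (F : Finset V), 1 ≤ l ∧ S = ⋃ v ∈ F, G.genVertex l v }

/-- An accommodating set for `(E,𝓛)`. -/
structure Accommodating (B : Set (Set V)) : Prop where
  empty_mem : ∅ ∈ B
  relRange_mem : ∀ S ∈ B, ∀ α : List A, G.IsLabelled α → G.relRange S α ∈ B
  inter_mem : ∀ S ∈ B, ∀ T ∈ B, S ∩ T ∈ B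
  union_mem : ∀ S ∈ B, ∀ T ∈ B, S ∪ T ∈ B
  rng_mem : ∀ α : List A, G.IsLabelled α → G.rngSet α ∈ B

/-- `𝓔^{0,-}`: the smallest accommodating set for `(E,𝓛)`. -/
def smallestAcc : Set (Set V) :=
  { S | ∀ B : Set (Set V), G.Accommodating B → S ∈ B }

/-- The labelled space `(E,𝓛,B)` is weakly left-resolving. -/
def WeaklyLeftResolving (B : Set (Set V)) : Prop :=
  ∀ S ∈ B, ∀ T ∈ B, ∀ α : List A, G.IsLabelled α →
    G.relRange S α ∩ G.relRange T α = G.relRange (S ∩ T) α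

/-- Standing assumptions: no sinks, set-finite, receiver set-finite, and
edges are determined by source, range and label. -/
structure StandingAssumptions (B : Set (Set V)) : Prop where
  no_sinks : ∀ v : V, ∃ e : Ed, G.src e = v
  set_finite : ∀ S ∈ B, (G.labelsFrom S).Finite
  receiver_set_finite : ∀ S ∈ B, (G.labelsInto S).Finite
  edge_eq : ∀ e f : Ed, G.src e = G.src f → G.rng e = G.rng f → G.lbl e = G.lbl f → e = f

/-- `(E,𝓛,B)` is strongly cofinal. -/
def StronglyCofinal : Prop :=
  ∀ x : ℕ → A, G.IsInfLabelled x → ∀ l : ℕ, 1 ≤ l → ∀ v : V, ∀ w ∈ G.infSrc x,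
    ∃ N : ℕ, 1 ≤ N ∧ ∃ (m : ℕ) (lds : Fin m → List A),
      (∀ i, G.IsLabelled (lds i)) ∧
      G.relRange (G.genVertex 1 w) (finTake x N) ⊆ ⋃ i, G.relRange (G.genVertex l v) (lds i)

/-- `(E,𝓛,B)` is `l`-cofinal. -/
def LCofinal (l : ℕ) : Prop :=
  ∀ x : ℕ → A, G.IsInfLabelled x → ∀ v : V, ∀ w ∈ G.infSrc x,
    ∃ d : ℕ, l ≤ d ∧ ∃ N : ℕ, 1 ≤ N ∧ ∃ (m : ℕ) (lds : Fin m → List A),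
      (∀ i, G.IsLabelled (lds i)) ∧
      G.relRange (G.genVertex d w) (finTake x N) ⊆ ⋃ i, G.relRange (G.genVertex l v) (lds i)

/-- `(E,𝓛,B)` is cofinal: `l`-cofinal for all `l ≥ L`, for some `L > 0`. -/
def Cofinal : Prop := ∃ L : ℕ, 0 < L ∧ ∀ l : ℕ, L ≤ l → G.LCofinal l

/-- `α` is agreeable for `[v]_l` (the condition only involves `l`):
`α = βα' = α'γ` with `|β| = |γ| ≤ l`. -/
def Agreeable (l : ℕ) (α : List A) : Prop :=
  ∃ β α' γ : List A, G.IsLabelled β ∧ G.IsLabelled α' ∧ G.IsLabelled γ ∧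
    β.length = γ.length ∧ β.length ≤ l ∧ α = β ++ α' ∧ α = α' ++ γ

/-- `α` (a labelled path with `s(α) ∩ [v]_l ≠ ∅`) is disagreeable for `[v]_l`. -/
def DisagreeablePath (l : ℕ) (v : V) (α : List A) : Prop :=
  G.IsLabelled α ∧ (G.srcSet α ∩ G.genVertex l v).Nonempty ∧ ¬ G.Agreeable l α

/-- The generalized vertex `[v]_l` is disagreeable. -/
def DisagreeableVtx (l : ℕ) (v : V) : Prop :=
  ∃ N : ℕ, 0 < N ∧ ∀ n : ℕ, N < n →
    ∃ α : List A, n ≤ α.length ∧ G.DisagreeablePath l v α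

/-- The labelled space is disagreeable. -/
def DisagreeableSpace : Prop :=
  ∀ v : V, ∃ L : ℕ, 0 < L ∧ ∀ l : ℕ, L < l → G.DisagreeableVtx l v

/-- A representation of the labelled space `(E,𝓛,B)` in a C*-algebra `𝔄`. -/
structure Rep (B : Set (Set V)) (𝔄 : Type*) [NonUnitalCStarAlgebra 𝔄] where
  p : Set V → 𝔄
  s : A → 𝔄
  p_empty : p ∅ = 0
  p_proj : ∀ S ∈ B, star (p S) = p S ∧ p S * p S = p S
  s_pisom : ∀ a : A, s a * star (s a) * s a = s a
  p_inter : ∀ S ∈ B, ∀ T ∈ B, p (S ∩ T) = p S * p T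
  p_union : ∀ S ∈ B, ∀ T ∈ B, p (S ∪ T) = p S + p T - p (S ∩ T)
  p_s : ∀ S ∈ B, ∀ a : A, p S * s a = s a * p (G.relRange S [a])
  s_star_s : ∀ a : A, star (s a) * s a = p (G.rngSet [a])
  s_orth : ∀ a b : A, a ≠ b → star (s a) * s b = 0
  p_sum : ∀ S ∈ B, ∀ h : (G.labelsFrom S).Finite, (G.labelsFrom S).Nonempty →
    p S = ∑ a ∈ h.toFinset, s a * p (G.relRange S [a]) * star (s a)

variable {G}

/-- `s_α = s_{α_1} ⋯ s_{α_n}` for a word `α`. -/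
def Rep.sWord {B : Set (Set V)} {𝔄 : Type*} [NonUnitalCStarAlgebra 𝔄]
    (ρ : G.Rep B 𝔄) : List A → 𝔄
  | [] => 0
  | a :: rest => rest.foldl (fun x b => x * ρ.s b) (ρ.s a)

/-- The C*-algebra `𝔄` is generated by the representation `ρ`. -/
def Rep.Generates {B : Set (Set V)} {𝔄 : Type*} [NonUnitalCStarAlgebra 𝔄]
    (ρ : G.Rep B 𝔄) : Prop :=
  closure (↑(NonUnitalStarAlgebra.adjoin ℂ
    (Set.range ρ.s ∪ ρ.p '' B)) : Set 𝔄) = Set.univ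

/-- The representation `ρ` is universal. -/
def Rep.Universal {B : Set (Set V)} {𝔄 : Type*} [NonUnitalCStarAlgebra 𝔄]
    (ρ : G.Rep B 𝔄) : Prop :=
  ∀ (C : Type*) [NonUnitalCStarAlgebra C], ∀ ρ' : G.Rep B C,
    ∃ φ : 𝔄 →⋆ₙₐ[ℂ] C, (∀ a : A, φ (ρ.s a) = ρ'.s a) ∧ ∀ S ∈ B, φ (ρ.p S) = ρ'.p S

end LabelledGraph

/-- A C*-algebra is simple if its only closed two-sided ideals are `{0}` and the
whole algebra. -/
def IsSimpleCStarAlgebra (𝔄 : Type*) [NonUnitalCStarAlgebra 𝔄] : Prop :=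
  ∀ I : TwoSidedIdeal 𝔄, IsClosed (I : Set 𝔄) →
    (I : Set 𝔄) = {0} ∨ (I : Set 𝔄) = Set.univ

/-!
Because `[v]_l` is not disagreeable, every long prefix of an infinite path from `v` is agreeable
and so has a period at most `l`; finitely many candidate periods force one period `k ≤ l` for the
whole path, hence the common period `l!` for all paths from `v`. To compare two paths `qx`, `qy`
from `v`, strong cofinality (generalized vertices being singletons) gives a path from `qy` into
`qx`, and splicing yields a path `Q` from `v` sharing a tail with `qx`. Periodicity transports the
tail agreement backwards along labels, and weak left-resolvingness makes an edge determined by its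
range and label, so either `Q` and `qx` carry the same label or one of them returns to `v`. A
return to `v` gives a cycle; prefixing it `l!` times to any path from `v` shows that every label
from `v` is the label of the cycle. Finally `β` is the prefix of that label of length its minimal
period.
-/

open Function Filter

namespace Function

variable {α : Type*} {f g : ℕ → α} {M : ℕ}

theorem Periodic.eq_of_eqOn_Iio (hf : Periodic f M) (hg : Periodic g M) (hM : 0 < M)
    (h : Set.EqOn f g (Set.Iio M)) : f = g := by
  funext n
  rw [← hf.map_mod_nat n, ← hg.map_mod_nat n]
  exact h (Nat.mod_lt n hM)

theorem Periodic.shift_eq_of_tail (hf : Periodic f M) (hg : Periodic g M) (hM : 0 < M)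
    {a c : ℕ} (h : ∀ i, f (a + i) = g (a + c + i)) (j : ℕ) : f j = g (j + c) := by
  have ha : a ≤ a * M := Nat.le_mul_of_pos_right a hM
  calc f j = f (j + a * M) := (hf.nat_mul a j).symm
    _ = f (a + (j + a * M - a)) := by congr 1; omega
    _ = g (a + c + (j + a * M - a)) := h _
    _ = g (j + c + a * M) := by congr 1; omega
    _ = g (j + c) := hg.nat_mul a (j + c)

theorem periodic_of_frequently {k : ℕ}
    (h : ∃ᶠ n in atTop, ∀ i, i + k < n → f (i + k) = f i) : Periodic f k := by
  intro i
  obtain ⟨n, hn, hper⟩ := frequently_atTop.1 h (i + k + 1)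
  exact hper i (by omega)

end Function

theorem List.getElem_add_length_of_append_eq {α : Type*} {w β w' γ : List α}
    (h₁ : w = β ++ w') (h₂ : w = w' ++ γ) {i : ℕ} (hi : i + β.length < w.length) :
    w[i + β.length] = w[i] := by
  have hw : w.length = β.length + w'.length := by rw [h₁, List.length_append]
  rw [List.getElem_of_eq h₁ hi, List.getElem_append_right (by omega),
    List.getElem_of_eq h₂ (by omega), List.getElem_append_left (by omega)]
  simp

section Words

variable {α : Type*}

theorem wpow_length (β : List α) (n : ℕ) : (wpow β n).length = n * β.length := by
  induction n with
  | zero => simp [wpow]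
  | succ n ih => simp [wpow, ih, Nat.succ_mul, Nat.add_comm]

theorem wpow_getElem (δ : List α) (hδ : δ ≠ []) (n i : ℕ) (h : i < (wpow δ n).length) :
    (wpow δ n)[i] = δ[i % δ.length]'(Nat.mod_lt _ (List.length_pos_iff.mpr hδ)) := by
  induction n generalizing i with
  | zero => simp [wpow] at h
  | succ n ih =>
    simp only [wpow] at h ⊢
    by_cases hi : i < δ.length
    · simp only [List.getElem_append_left hi, Nat.mod_eq_of_lt hi]
    · rw [List.getElem_append_right (by omega), ih]
      simp only [Nat.mod_eq_sub_mod (Nat.le_of_not_lt hi)]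

@[simp] theorem finTake_length (x : ℕ → α) (N : ℕ) : (finTake x N).length = N := by
  simp [finTake]

@[simp] theorem finTake_getElem (x : ℕ → α) {N i : ℕ} (h : i < (finTake x N).length) :
    (finTake x N)[i] = x i := by
  simp [finTake]

theorem isPowInf.periodic {β : List α} {x : ℕ → α} (h : isPowInf β x) :
    Periodic x β.length := by
  obtain ⟨_, hx⟩ := h
  intro n
  simp only [hx, Nat.add_mod_right]

theorem isPowInf_iff_eq {β : List α} {x y : ℕ → α} (hy : isPowInf β y) :
    isPowInf β x ↔ x = y := by
  refine ⟨fun hx => funext fun n => ?_, fun h => h ▸ hy⟩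
  obtain ⟨_, hx⟩ := hx
  obtain ⟨_, hy⟩ := hy
  rw [hx, hy]

theorem isPowInf_finTake {x : ℕ → α} {p : ℕ} (hp : 0 < p) (hx : Periodic x p) :
    isPowInf (finTake x p) x := by
  refine ⟨by simpa [← List.length_pos_iff] using hp, fun n => ?_⟩
  simp [hx.map_mod_nat]

theorem isPowInf_of_wpow {δ : List α} {x : ℕ → α} (hδ : δ ≠ []) {n : ℕ}
    (h : isPowInf (wpow δ n) x) : isPowInf δ x := by
  obtain ⟨_, hx⟩ := h
  refine ⟨hδ, fun m => ?_⟩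
  simp only [hx, List.get_eq_getElem, wpow_getElem δ hδ]
  congr 1
  exact Nat.mod_mod_of_dvd m (by rw [wpow_length]; exact Dvd.intro_left n rfl)

theorem simpleWord_finTake {x : ℕ → α} {p : ℕ} (hp : 0 < p) (hx : Periodic x p)
    (hmin : ∀ k, 0 < k → k < p → ¬ Periodic x k) : SimpleWord (finTake x p) := by
  refine ⟨by simpa [← List.length_pos_iff] using hp, ?_⟩
  rintro ⟨δ, n, hδ, hlt, -, hpow⟩
  have := isPowInf_finTake hp hx
  rw [hpow] at this
  exact hmin δ.length (List.length_pos_iff.mpr hδ) (by simpa using hlt)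
    (isPowInf_of_wpow hδ this).periodic

theorem exists_simpleWord_isPowInf {x : ℕ → α} {k : ℕ} (hk : 0 < k) (hx : Periodic x k) :
    ∃ p, 0 < p ∧ p ≤ k ∧ SimpleWord (finTake x p) ∧ isPowInf (finTake x p) x := by
  classical
  have hex : ∃ p, 0 < p ∧ Periodic x p := ⟨k, hk, hx⟩
  obtain ⟨hp, hxp⟩ := Nat.find_spec hex
  refine ⟨Nat.find hex, hp, Nat.find_min' hex ⟨hk, hx⟩, simpleWord_finTake hp hxp ?_,
    isPowInf_finTake hp hxp⟩
  exact fun j hj hjp hxj => Nat.find_min hex hjp ⟨hj, hxj⟩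

end Words

namespace LabelledGraph

variable {V Ed A : Type*} {G : LabelledGraph V Ed A}

theorem mem_genVertex_self (l : ℕ) (v : V) : v ∈ G.genVertex l v := rfl

theorem genVertex_eq_of_mem {l : ℕ} {u w : V} (h : w ∈ G.genVertex l u) :
    G.genVertex l w = G.genVertex l u := by
  ext z
  exact ⟨fun hz => hz.trans h, fun hz => hz.trans h.symm⟩

theorem exists_genVertex_eq_singleton {u : V} (hu : ({u} : Set V) ∈ G.barE) :
    ∃ l, 1 ≤ l ∧ G.genVertex l u = {u} := by
  obtain ⟨l, F, hl, hF⟩ := hu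
  obtain ⟨w, hwF, huw⟩ := Set.mem_iUnion₂.1 (hF ▸ Set.mem_singleton u)
  refine ⟨l, hl, Set.eq_singleton_iff_unique_mem.2 ⟨mem_genVertex_self l u, fun z hz => ?_⟩⟩
  rw [genVertex_eq_of_mem huw] at hz
  exact hF.symm.subset (Set.mem_biUnion hwF hz)

def GPath.single (e : Ed) : G.GPath := ⟨[e], List.cons_ne_nil e [], List.isChain_singleton e⟩


def LeftResolving (G : LabelledGraph V Ed A) : Prop :=
  ∀ e f : Ed, G.rng e = G.rng f → G.lbl e = G.lbl f → e = f

theorem leftResolving_of_weaklyLeftResolving (hwlr : G.WeaklyLeftResolving G.barE)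
    (hsing : ∀ w : V, ({w} : Set V) ∈ G.barE) (hsa : G.StandingAssumptions G.barE) :
    G.LeftResolving := by
  intro e f hr hl
  refine hsa.edge_eq e f ?_ hr hl
  have hmem : G.rng e ∈ G.relRange {G.src e} [G.lbl e] ∩ G.relRange {G.src f} [G.lbl e] :=
    ⟨⟨GPath.single e, rfl, rfl, rfl⟩, ⟨GPath.single f, by rw [hl]; rfl, rfl, hr.symm⟩⟩
  rw [hwlr _ (hsing _) _ (hsing _) [G.lbl e] ⟨GPath.single e, rfl⟩] at hmem
  obtain ⟨p, -, ⟨hpe, hpf⟩, -⟩ := hmem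
  exact hpe.symm.trans hpf

def GInfPath.take (q : G.GInfPath) (N : ℕ) (hN : 0 < N) : G.GPath where
  edges := List.ofFn fun i : Fin N => q.edges i
  ne := by simpa using hN.ne'
  chain := List.isChain_iff_getElem.2 fun i _ => by simpa using q.chain i

def GInfPath.drop (q : G.GInfPath) (N : ℕ) : G.GInfPath where
  edges n := q.edges (N + n)
  chain n := q.chain (N + n)

@[simp] theorem GInfPath.take_len (q : G.GInfPath) (N : ℕ) (hN : 0 < N) :
    (q.take N hN).len = N := by
  simp [GInfPath.take, GPath.len]

@[simp] theorem GInfPath.take_edges_getElem (q : G.GInfPath) {N : ℕ} (hN : 0 < N) {i : ℕ}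
    (hi : i < (q.take N hN).edges.length) : (q.take N hN).edges[i] = q.edges i := by
  simp [GInfPath.take]

theorem GInfPath.take_label (q : G.GInfPath) (N : ℕ) (hN : 0 < N) :
    (q.take N hN).label = finTake q.label N := by
  simp only [GPath.label, GInfPath.take, List.map_ofFn, finTake]
  rfl

@[simp] theorem GInfPath.take_src (q : G.GInfPath) (N : ℕ) (hN : 0 < N) :
    (q.take N hN).src = q.src := by
  simp [GPath.src, GInfPath.take, GInfPath.src, List.head_ofFn]

@[simp] theorem GInfPath.take_rng (q : G.GInfPath) (N : ℕ) (hN : 0 < N) :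
    (q.take N hN).rng = G.src (q.edges N) := by
  simp only [GPath.rng, GInfPath.take, List.getLast_ofFn]
  simpa [Nat.sub_add_cancel hN] using q.chain (N - 1)

@[simp] theorem GInfPath.drop_edges (q : G.GInfPath) (N n : ℕ) :
    (q.drop N).edges n = q.edges (N + n) := rfl


def GPath.append (p : G.GPath) (q : G.GInfPath) (h : p.rng = q.src) : G.GInfPath where
  edges n := if hn : n < p.edges.length then p.edges[n] else q.edges (n - p.edges.length)
  chain n := by
    rcases lt_trichotomy (n + 1) p.edges.length with hn | hn | hn
    · simpa [hn, Nat.lt_of_succ_lt hn] using List.isChain_iff_getElem.1 p.chain n hn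
    · have hlast : p.edges[n] = p.edges.getLast p.ne := by
        simp [List.getLast_eq_getElem, ← hn]
      simpa [show n < p.edges.length by omega, hn, hlast, GInfPath.src, GPath.rng] using h
    · simpa [show ¬ n < p.edges.length by omega, show ¬ n + 1 < p.edges.length by omega,
        show n + 1 - p.edges.length = n - p.edges.length + 1 by omega]
        using q.chain (n - p.edges.length)

theorem GPath.append_edges_of_lt (p : G.GPath) (q : G.GInfPath) (h : p.rng = q.src) {n : ℕ}
    (hn : n < p.edges.length) : (p.append q h).edges n = p.edges[n] := dif_pos hn

@[simp] theorem GPath.append_edges_len_add (p : G.GPath) (q : G.GInfPath) (h : p.rng = q.src)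
    (n : ℕ) : (p.append q h).edges (p.len + n) = q.edges n := by
  simp [GPath.append, GPath.len]

@[simp] theorem GPath.append_src (p : G.GPath) (q : G.GInfPath) (h : p.rng = q.src) :
    (p.append q h).src = p.src := by
  simp [GPath.append, GInfPath.src, GPath.src, List.head_eq_getElem, List.length_pos_iff, p.ne]

theorem exists_gInfPath_src (hsinks : ∀ u : V, ∃ e : Ed, G.src e = u) (v : V) :
    ∃ q : G.GInfPath, q.src = v := by
  choose f hf using hsinks
  exact ⟨⟨fun n => Nat.rec (motive := fun _ => Ed) (f v) (fun _ e => f (G.rng e)) n,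
    fun n => (hf _).symm⟩, hf v⟩

theorem GPath.append_label_len_add (p : G.GPath) (q : G.GInfPath) (h : p.rng = q.src)
    (n : ℕ) : (p.append q h).label (p.len + n) = q.label n := by
  simp [GInfPath.label]

theorem GInfPath.take_append_label_of_lt (q : G.GInfPath) {N : ℕ} (hN : 0 < N) (q' : G.GInfPath)
    (h : (q.take N hN).rng = q'.src) {j : ℕ} (hj : j < N) :
    ((q.take N hN).append q' h).label j = q.label j := by
  have hj' : j < (q.take N hN).edges.length := by simpa [GInfPath.take] using hj
  simp [GInfPath.label, GPath.append_edges_of_lt _ _ _ hj']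

def GInfPath.cycle (q : G.GInfPath) (n : ℕ) (hn : 0 < n) (h : G.src (q.edges n) = q.src) :
    G.GInfPath where
  edges j := q.edges (j % n)
  chain j := by
    rw [q.chain, ← Nat.mod_add_mod]
    rcases Nat.lt_or_eq_of_le (Nat.mod_lt j hn) with hlt | heq
    · rw [Nat.mod_eq_of_lt hlt]
    · rw [Nat.succ_eq_add_one] at heq
      rw [heq, Nat.mod_self]
      exact h

theorem Agreeable.exists_period {l n : ℕ} {x : ℕ → A} (h : G.Agreeable l (finTake x n)) :
    ∃ k ∈ Finset.Icc 1 l, ∀ i, i + k < n → x (i + k) = x i := by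
  obtain ⟨β, α', γ, ⟨p, rfl⟩, -, -, -, hle, h₁, h₂⟩ := h
  refine ⟨p.label.length, Finset.mem_Icc.2 ⟨?_, hle⟩, fun i hi => ?_⟩
  · simpa [GPath.label, Nat.one_le_iff_ne_zero] using p.ne
  · have := List.getElem_add_length_of_append_eq h₁ h₂ (by simpa using hi)
    rwa [finTake_getElem, finTake_getElem] at this

theorem exists_periodic_of_not_disagreeableVtx {l : ℕ} {v : V} (h : ¬ G.DisagreeableVtx l v)
    {q : G.GInfPath} (hq : q.src = v) : ∃ k, 0 < k ∧ k ≤ l ∧ Periodic q.label k := by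
  simp only [DisagreeableVtx] at h
  push Not at h
  obtain ⟨n₀, -, hn₀⟩ := h 1 one_pos
  have hev : ∀ᶠ n in atTop, ∃ k ∈ Finset.Icc 1 l,
      ∀ i, i + k < n → q.label (i + k) = q.label i := by
    filter_upwards [eventually_ge_atTop n₀, eventually_gt_atTop 0] with n hn hn0
    refine Agreeable.exists_period (G := G) (not_not.1 fun hna => hn₀ _ (by simpa using hn)
      ⟨⟨q.take n hn0, q.take_label n hn0⟩, ⟨v, ?_, mem_genVertex_self l v⟩, hna⟩)
    exact ⟨q.take n hn0, q.take_label n hn0, by simpa using hq⟩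
  obtain ⟨k, hk, hfreq⟩ := (Finset.frequently_exists _).1 hev.frequently
  exact ⟨k, (Finset.mem_Icc.1 hk).1, (Finset.mem_Icc.1 hk).2, periodic_of_frequently hfreq⟩

theorem exists_path_to_of_stronglyCofinal (hsc : G.StronglyCofinal)
    (hsing : ∀ w : V, ({w} : Set V) ∈ G.barE) (q : G.GInfPath) (u : V) :
    ∃ N, ∃ P : G.GPath, P.src = u ∧ P.rng = (q.drop N).src := by
  obtain ⟨l, hl, hu⟩ := exists_genVertex_eq_singleton (hsing u)
  obtain ⟨N, hN, _, _, -, hsub⟩ := hsc q.label ⟨q, rfl⟩ l hl u q.src ⟨q, rfl, rfl⟩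
  have hmem : G.src (q.edges N) ∈ G.relRange (G.genVertex 1 q.src) (finTake q.label N) :=
    ⟨q.take N hN, q.take_label N hN, by simpa using mem_genVertex_self 1 q.src, q.take_rng N hN⟩
  obtain ⟨-, P, -, hPs, hPr⟩ := Set.mem_iUnion.1 (hsub hmem)
  exact ⟨N, P, by simpa [hu] using hPs, hPr⟩

theorem GInfPath.edges_eq_of_label_shift (hG : G.LeftResolving) {q q' : G.GInfPath} {a c : ℕ}
    (ha : q.edges a = q'.edges (a + c)) (hlab : ∀ j, q.label j = q'.label (j + c)) {j : ℕ}
    (hj : j ≤ a) :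
    q.edges j = q'.edges (j + c) := by
  induction hj using Nat.decreasingInduction with
  | self => exact ha
  | of_succ k _ ih =>
    refine hG _ _ ?_ (hlab k)
    rw [q.chain, q'.chain, ih, Nat.add_right_comm]

section PeriodicLabels

variable {M : ℕ} {v : V}

theorem label_eq_of_returns (hM : 0 < M)
    (hper : ∀ q : G.GInfPath, q.src = v → Periodic q.label M)
    {q₀ : G.GInfPath} (hq₀ : q₀.src = v) {n : ℕ} (hn : 0 < n) (hret : G.src (q₀.edges n) = v)
    {q q' : G.GInfPath} (hq : q.src = v) (hq' : q'.src = v) : q.label = q'.label := by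
  set z := q₀.cycle n hn (hret.trans hq₀.symm)
  have hz : z.src = v := by simpa [z, GInfPath.cycle, GInfPath.src] using hq₀
  suffices key : ∀ q : G.GInfPath, q.src = v → q.label = z.label from
    (key q hq).trans (key q' hq').symm
  intro q hq
  have hnM : 0 < n * M := Nat.mul_pos hn hM
  have hlink : (z.take (n * M) hnM).rng = q.src := by
    simp only [z, GInfPath.cycle, GInfPath.take_rng, Nat.mul_mod_right, hq]
    exact hq₀
  set Q := (z.take (n * M) hnM).append q hlink
  have hQ : Q.src = v := by simp [Q, hz]
  -- `Q` runs `M` times around the cycle before following `q`, and `n * M` is a period of `Q`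
  have hQq : Q.label = q.label := funext fun j => by
    rw [← (hper Q hQ).nat_mul n j, add_comm]
    simpa using (z.take (n * M) hnM).append_label_len_add q hlink j
  refine (hper q hq).eq_of_eqOn_Iio (hper z hz) hM fun j hj => ?_
  rw [← hQq]
  exact z.take_append_label_of_lt hnM q hlink (lt_of_lt_of_le hj (Nat.le_mul_of_pos_left M hn))

theorem label_eq_or_returns (hG : G.LeftResolving) (hM : 0 < M) {q q' : G.GInfPath}
    (hq : q.src = v) (hf : Periodic q.label M) (hg : Periodic q'.label M) {a c : ℕ}
    (h : ∀ i, q.edges (a + i) = q'.edges (a + c + i)) :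
    q.label = q'.label ∨ 0 < c ∧ G.src (q'.edges c) = v := by
  have hlab := hf.shift_eq_of_tail hg hM fun i => congrArg G.lbl (h i)
  rcases Nat.eq_zero_or_pos c with rfl | hc
  · exact Or.inl (funext hlab)
  · refine Or.inr ⟨hc, ?_⟩
    have h0 := GInfPath.edges_eq_of_label_shift hG (by simpa using h 0) hlab (Nat.zero_le a)
    rw [← hq, GInfPath.src, h0, zero_add]

theorem label_eq_of_src_eq (hG : G.LeftResolving) (hsc : G.StronglyCofinal)
    (hsing : ∀ w : V, ({w} : Set V) ∈ G.barE) (hM : 0 < M)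
    (hper : ∀ q : G.GInfPath, q.src = v → Periodic q.label M)
    {qx qy : G.GInfPath} (hqx : qx.src = v) (hqy : qy.src = v) : qx.label = qy.label := by
  obtain ⟨N, P, hPs, hPr⟩ := exists_path_to_of_stronglyCofinal hsc hsing qx (G.src (qy.edges M))
  have hlink : (qy.take M hM).rng = (P.append (qx.drop N) hPr).src := by
    rw [GPath.append_src, hPs, GInfPath.take_rng]
  set Q := (qy.take M hM).append (P.append (qx.drop N) hPr) hlink
  have hQ : Q.src = v := by simp [Q, hqy]
  have hQtail : ∀ i, Q.edges (M + P.len + i) = qx.edges (N + i) := fun i => by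
    simpa [add_assoc] using
      (qy.take M hM).append_edges_len_add (P.append (qx.drop N) hPr) hlink (P.len + i)
  have key : Q.label = qx.label ∨
      ∃ q₀ : G.GInfPath, q₀.src = v ∧ ∃ n, 0 < n ∧ G.src (q₀.edges n) = v := by
    rcases le_total (M + P.len) N with hle | hle
    · refine (label_eq_or_returns hG hM hQ (hper Q hQ) (hper qx hqx) (a := M + P.len)
        (c := N - (M + P.len)) fun i => ?_).imp_right fun hret => ⟨qx, hqx, _, hret⟩
      rw [hQtail, Nat.add_sub_cancel' hle]
    · refine (label_eq_or_returns hG hM hqx (hper qx hqx) (hper Q hQ) (a := N)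
        (c := M + P.len - N) fun i => ?_).imp Eq.symm fun hret => ⟨Q, hQ, _, hret⟩
      rw [Nat.add_sub_cancel' hle, hQtail]
  rcases key with hQx | ⟨q₀, hq₀, n, hn, hret⟩
  · refine (hper qx hqx).eq_of_eqOn_Iio (hper qy hqy) hM fun j hj => ?_
    rw [← hQx]
    exact qy.take_append_label_of_lt hM _ _ hj
  · exact label_eq_of_returns hM hper hq₀ hn hret hqx hqy

end PeriodicLabels

end LabelledGraph

open LabelledGraph in
theorem not_disagreeable_implies_unique_infinite_path_general
    {V Ed A : Type*} (G : LabelledGraph V Ed A)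
    (hwlr : G.WeaklyLeftResolving G.barE)
    (hsa : G.StandingAssumptions G.barE)
    (hsc : G.StronglyCofinal)
    (hsing : ∀ w : V, ({w} : Set V) ∈ G.barE)
    (v : V) (l : ℕ)
    (h : ¬ G.DisagreeableVtx l v) :
    ∃ β : List A, G.IsLabelled β ∧ β.length ≤ l ∧ SimpleWord β ∧
      ∀ x : ℕ → A, (∃ q : G.GInfPath, q.label = x ∧ q.src = v) ↔ isPowInf β x := by
  have hG := leftResolving_of_weaklyLeftResolving hwlr hsing hsa
  have hper : ∀ q : G.GInfPath, q.src = v → Periodic q.label l.factorial := fun q hq => by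
    obtain ⟨k, hk, hkl, hqk⟩ := exists_periodic_of_not_disagreeableVtx h hq
    obtain ⟨m, hm⟩ := Nat.dvd_factorial hk hkl
    simpa [hm, mul_comm] using hqk.nat_mul m
  obtain ⟨q₀, hq₀⟩ := exists_gInfPath_src hsa.no_sinks v
  obtain ⟨k, hk, hkl, hq₀k⟩ := exists_periodic_of_not_disagreeableVtx h hq₀
  obtain ⟨p, hp, hpk, hsimple, hpow⟩ := exists_simpleWord_isPowInf hk hq₀k
  refine ⟨finTake q₀.label p, ⟨q₀.take p hp, q₀.take_label p hp⟩, by simpa using hpk.trans hkl,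
    hsimple, fun x => ?_⟩
  rw [isPowInf_iff_eq hpow]
  constructor
  · rintro ⟨q, rfl, hq⟩
    exact label_eq_of_src_eq hG hsc hsing l.factorial_pos hper hq hq₀
  · rintro rfl
    exact ⟨q₀, rfl, hq₀⟩

/-- In a weakly left-resolving, strongly cofinal labelled space
`(E,𝓛,Ē^{0,-})` with all singletons in `Ē^{0,-}`, if `[v]_l` is not disagreeable
then `𝓛(vE^∞) = {β^∞}` for a single simple labelled path `β ∈ 𝓛(E^{≤l})`. -/
theorem not_disagreeable_implies_unique_infinite_path
    {V Ed A : Type*} [Countable A] (G : LabelledGraph V Ed A)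
    (hacc : G.Accommodating G.barE)
    (hwlr : G.WeaklyLeftResolving G.barE)
    (hsa : G.StandingAssumptions G.barE)
    (hsc : G.StronglyCofinal)
    (hsing : ∀ w : V, ({w} : Set V) ∈ G.barE)
    (v : V) (l : ℕ) (hl : 1 ≤ l)
    (h : ¬ G.DisagreeableVtx l v) :
    ∃ β : List A, G.IsLabelled β ∧ β.length ≤ l ∧ SimpleWord β ∧
      ∀ x : ℕ → A, (∃ q : G.GInfPath, q.label = x ∧ q.src = v) ↔ isPowInf β x :=
  not_disagreeable_implies_unique_infinite_path_general G hwlr hsa hsc hsing v l h
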